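/- arXiv:1711.10113 — 2 statements merged into one kernel-verified Lean document; each statement's English description precedes it below -/
import Mathlib

section
/- Let v_1, …, v_d ∈ ℝⁿ and let Δ = {x ∈ ℝⁿ : ⟨x, v_j⟩ ≥ −1 for all 1 ≤ j ≤ d}. Let b ∈ ℝⁿ with ⟨b, v_j⟩ > −1 for all j, let c < 0, and set Q = c·b. Assume Q ∈ Δ and there exists k with ⟨Q, v_k⟩ = −1. Then min_{1 ≤ i ≤ d} 1/(⟨b, v_i⟩ + 1) = −c/(1 − c) = ‖Q‖/‖b − Q‖, where ‖·‖ is the Euclidean norm. -/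
open RealInnerProductSpace

/-- The combinatorial identity `δ(X) = R(X)`: with `b` the (interior) barycenter of the
polytope `Δ = {x : ⟪x, vⱼ⟫ ≥ -1 ∀ j}` and `Q = c • b` (with `c < 0`) the boundary point on
the ray from `b` through the origin, one has
`min_i 1/(⟪b, vᵢ⟫ + 1) = -c/(1-c) = ‖Q‖/‖b - Q‖`. -/
theorem delta_invariant_eq_greatest_ricci_lower_bound
    {n d : ℕ} (hd : 0 < d) (v : Fin d → EuclideanSpace ℝ (Fin n))
    (Δ : Set (EuclideanSpace ℝ (Fin n)))
    (hΔ : Δ = {x : EuclideanSpace ℝ (Fin n) | ∀ j, -1 ≤ ⟪x, v j⟫})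
    (b : EuclideanSpace ℝ (Fin n)) (hb : ∀ j, -1 < ⟪b, v j⟫)
    (c : ℝ) (hc : c < 0)
    (Q : EuclideanSpace ℝ (Fin n)) (hQ : Q = c • b)
    (hQΔ : Q ∈ Δ) (hk : ∃ k, ⟪Q, v k⟫ = -1) :
    (⨅ i : Fin d, 1 / (⟪b, v i⟫ + 1)) = -c / (1 - c) ∧
      -c / (1 - c) = ‖Q‖ / ‖b - Q‖ := by
  haveI : Nonempty (Fin d) := ⟨⟨0, hd⟩⟩
  obtain ⟨k, hkk⟩ := hk
  have hcne : c ≠ 0 := ne_of_lt hc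
  have hQin : ∀ j, -1 ≤ c * ⟪b, v j⟫ := by
    intro j
    have h := (hΔ ▸ hQΔ) j
    rwa [hQ, real_inner_smul_left] at h
  have hkb : c * ⟪b, v k⟫ = -1 := by
    rw [hQ, real_inner_smul_left] at hkk; exact hkk
  have hbk : ⟪b, v k⟫ = -1 / c := by
    rw [eq_div_iff hcne]; linear_combination hkb
  have hle : ∀ j, ⟪b, v j⟫ ≤ -1 / c := by
    intro j
    rw [le_div_iff_of_neg hc]
    nlinarith [hQin j]
  have hcpos : (0:ℝ) < -1 / c := by
    apply div_pos_of_neg_of_neg <;> linarith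
  have hncne : -c ≠ 0 := neg_ne_zero.mpr hcne
  have hden : -1 / c + 1 = (1 - c) / (-c) := by
    field_simp
    ring
  have h3 : -c / (1 - c) = 1 / (-1 / c + 1) := by
    rw [hden, one_div_div]
  have hval : ∀ j, -c / (1 - c) ≤ 1 / (⟪b, v j⟫ + 1) := by
    intro j
    have h1 : 0 < ⟪b, v j⟫ + 1 := by linarith [hb j]
    have h2 : ⟪b, v j⟫ + 1 ≤ -1 / c + 1 := by linarith [hle j]
    rw [h3]
    exact one_div_le_one_div_of_le h1 h2
  have hkval : 1 / (⟪b, v k⟫ + 1) = -c / (1 - c) := by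
    rw [hbk, h3]
  constructor
  · apply le_antisymm
    · calc (⨅ i : Fin d, 1 / (⟪b, v i⟫ + 1)) ≤ 1 / (⟪b, v k⟫ + 1) :=
            ciInf_le (Finite.bddBelow_range _) k
        _ = -c / (1 - c) := hkval
    · exact le_ciInf hval
  · have hbne : b ≠ 0 := by
      intro h
      rw [h] at hbk
      simp [inner_zero_left] at hbk
      have : (-1:ℝ)/c > 0 := hcpos
      rw [← hbk] at this
      exact lt_irrefl _ this
    have hbn : 0 < ‖b‖ := norm_pos_iff.mpr hbne
    have h1 : ‖Q‖ = -c * ‖b‖ := by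
      rw [hQ, norm_smul, Real.norm_eq_abs, abs_of_neg hc]
    have h2 : ‖b - Q‖ = (1 - c) * ‖b‖ := by
      have : b - Q = (1 - c) • b := by rw [hQ]; module
      rw [this, norm_smul, Real.norm_eq_abs, abs_of_pos (by linarith)]
    rw [h1, h2, mul_div_mul_right _ _ (ne_of_gt hbn)]
end

section
/- Let Δ = {x ∈ ℝ² : ⟨x, v_i⟩ ≥ −1 for i = 1,…,4} with v₁ = (1,0), v₂ = (1,1), v₃ = (0,1), v₄ = (−1,−1), and let b = (1/vol(Δ))·∫_Δ x dx be its barycenter. Then min_{1 ≤ i ≤ 4} 1/(⟨b, v_i⟩ + 1) = 6/7. -/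
/-!
The volume-preserving shear `x ↦ (x₀ + x₁, x₀)` maps `Δ` onto the trapezoid
`{(s, t) : -1 ≤ s ≤ 1, -1 ≤ t ≤ s + 1}`, over which every integral is an iterated
one-variable integral: its area is `4` and `∫ t = 1/3`, `∫ s = 2/3`. Since `x₀ = t` and
`x₁ = s - t`, the barycenter is `b = (1/12, 1/12)`; the pairings `⟨b, vᵢ⟩` are
`1/12, 1/6, 1/12, -1/6`, so the minimum of `1/(⟨b, vᵢ⟩ + 1)` is `6/7`, attained at `v₂`.
-/

open MeasureTheory

/-- The facet normals of the reflexive Delzant polytope of the blow-up of `P²` at a point. -/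
def blowupP2Normals : Fin 4 → Fin 2 → ℝ :=
  ![![1, 0], ![1, 1], ![0, 1], ![-1, -1]]

open Set

section Fubini

variable {α β E : Type*} [MeasurableSpace α] [MeasurableSpace β] {μ : Measure α}
  {ν : Measure β} [SFinite μ] [SFinite ν] [NormedAddCommGroup E] [NormedSpace ℝ E]

theorem setIntegral_prod_eq_integral_setIntegral_preimage_mk {s : Set (α × β)}
    (hs : MeasurableSet s) {f : α × β → E} (hf : IntegrableOn f s (μ.prod ν)) :
    ∫ p in s, f p ∂μ.prod ν = ∫ x, ∫ y in Prod.mk x ⁻¹' s, f (x, y) ∂ν ∂μ := by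
  rw [← integral_indicator hs, integral_prod _ (hf.integrable_indicator hs)]
  congr 1 with x
  rw [← integral_indicator (measurable_prodMk_left hs)]
  rfl

def closedRegionBetween (lo hi : α → ℝ) (s : Set α) : Set (α × ℝ) :=
  {p | p.1 ∈ s ∧ p.2 ∈ Icc (lo p.1) (hi p.1)}

theorem measurableSet_closedRegionBetween {lo hi : α → ℝ} {s : Set α} (hlo : Measurable lo)
    (hhi : Measurable hi) (hs : MeasurableSet s) :
    MeasurableSet (closedRegionBetween lo hi s) :=
  (measurable_fst hs).inter ((measurableSet_le (hlo.comp measurable_fst) measurable_snd).inter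
    (measurableSet_le measurable_snd (hhi.comp measurable_fst)))

theorem setIntegral_closedRegionBetween {lo hi : α → ℝ} {s : Set α} (hlo : Measurable lo)
    (hhi : Measurable hi) (hs : MeasurableSet s) (hle : ∀ x ∈ s, lo x ≤ hi x)
    {f : α × ℝ → E} (hf : IntegrableOn f (closedRegionBetween lo hi s) (μ.prod volume)) :
    ∫ p in closedRegionBetween lo hi s, f p ∂μ.prod volume =
      ∫ x in s, (∫ y in lo x..hi x, f (x, y)) ∂μ := by
  rw [setIntegral_prod_eq_integral_setIntegral_preimage_mk
    (measurableSet_closedRegionBetween hlo hhi hs) hf, ← integral_indicator hs]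
  congr 1 with x
  by_cases hx : x ∈ s
  · have hsection : Prod.mk x ⁻¹' closedRegionBetween lo hi s = Icc (lo x) (hi x) := by
      ext; simp [closedRegionBetween, hx]
    rw [indicator_of_mem hx, hsection, intervalIntegral.integral_of_le (hle x hx),
      integral_Icc_eq_integral_Ioc]
  · simp [closedRegionBetween, hx]

end Fubini

def blowupP2Trapezoid : Set (ℝ × ℝ) :=
  closedRegionBetween (fun _ => -1) (· + 1) (Icc (-1) 1)

theorem blowupP2Trapezoid_subset_Icc : blowupP2Trapezoid ⊆ Icc (-1, -1) (1, 2) := by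
  rintro ⟨s, t⟩ ⟨⟨hs₀, hs₁⟩, ht₀, ht₁⟩
  exact ⟨⟨hs₀, ht₀⟩, hs₁, by simp only at ht₁ ⊢; linarith⟩

theorem integrableOn_blowupP2Trapezoid {f : ℝ × ℝ → ℝ} (hf : Continuous f) :
    IntegrableOn f blowupP2Trapezoid :=
  (hf.continuousOn.integrableOn_compact isCompact_Icc).mono_set blowupP2Trapezoid_subset_Icc

theorem setIntegral_blowupP2Trapezoid {f : ℝ × ℝ → ℝ} (hf : Continuous f) :
    ∫ p in blowupP2Trapezoid, f p = ∫ s in (-1)..1, ∫ t in (-1)..(s + 1), f (s, t) := by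
  rw [Measure.volume_eq_prod, blowupP2Trapezoid, setIntegral_closedRegionBetween
    measurable_const (measurable_add_const 1) measurableSet_Icc
    (fun s hs => by linarith [hs.1]) (integrableOn_blowupP2Trapezoid hf),
    intervalIntegral.integral_of_le (by norm_num), integral_Icc_eq_integral_Ioc]

theorem volume_real_blowupP2Trapezoid : volume.real blowupP2Trapezoid = 4 := by
  have h := setIntegral_blowupP2Trapezoid (f := fun _ => (1 : ℝ)) continuous_const
  rw [setIntegral_const, smul_eq_mul, mul_one] at h
  rw [h]
  norm_num

theorem setIntegral_blowupP2Trapezoid_snd : ∫ p in blowupP2Trapezoid, p.2 = 1 / 3 := by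
  rw [setIntegral_blowupP2Trapezoid continuous_snd]
  norm_num [intervalIntegral.integral_comp_add_right (fun x : ℝ => x ^ 2 - 1)]

theorem setIntegral_blowupP2Trapezoid_fst : ∫ p in blowupP2Trapezoid, p.1 = 2 / 3 := by
  rw [setIntegral_blowupP2Trapezoid continuous_fst]
  simp only [intervalIntegral.integral_const, smul_eq_mul]
  rw [intervalIntegral.integral_congr (g := fun s : ℝ => (s + 1) ^ 2 - 1) (fun s _ => by ring)]
  norm_num [intervalIntegral.integral_comp_add_right (fun x : ℝ => x ^ 2 - 1)]

def blowupP2Polytope : Set (Fin 2 → ℝ) :=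
  {x | ∀ i : Fin 4, -1 ≤ ∑ j, x j * blowupP2Normals i j}

def blowupP2Coords : (Fin 2 → ℝ) ≃ᵐ ℝ × ℝ :=
  MeasurableEquiv.finTwoArrow.trans ((MeasurableEquiv.shearAddRight ℝ).trans .prodComm)

@[simp]
theorem blowupP2Coords_apply (x : Fin 2 → ℝ) : blowupP2Coords x = (x 0 + x 1, x 0) := rfl

theorem measurePreserving_blowupP2Coords : MeasurePreserving blowupP2Coords volume volume :=
  (Measure.measurePreserving_swap.comp (measurePreserving_prod_add volume volume)).comp
    (volume_preserving_finTwoArrow ℝ)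

theorem blowupP2Polytope_eq_preimage :
    blowupP2Polytope = blowupP2Coords ⁻¹' blowupP2Trapezoid := by
  ext x
  simp [blowupP2Polytope, blowupP2Trapezoid, closedRegionBetween, Fin.forall_fin_succ,
    blowupP2Normals]
  constructor
  · rintro ⟨h₀, h₁, h₂, h₃⟩
    exact ⟨⟨h₁, by linarith⟩, h₀, by linarith⟩
  · rintro ⟨⟨h₁, h₃⟩, h₀, h₂⟩
    exact ⟨h₀, h₁, by linarith, by linarith⟩

theorem volume_real_blowupP2Polytope : volume.real blowupP2Polytope = 4 := by
  rw [blowupP2Polytope_eq_preimage, measureReal_def,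
    measurePreserving_blowupP2Coords.measure_preimage_equiv, ← measureReal_def,
    volume_real_blowupP2Trapezoid]

theorem integrableOn_blowupP2Polytope_comp {f : ℝ × ℝ → ℝ} (hf : Continuous f) :
    IntegrableOn (fun x => f (blowupP2Coords x)) blowupP2Polytope := by
  rw [blowupP2Polytope_eq_preimage]
  exact (measurePreserving_blowupP2Coords.integrableOn_comp_preimage
    blowupP2Coords.measurableEmbedding).2 (integrableOn_blowupP2Trapezoid hf)

theorem integrableOn_blowupP2Polytope_apply (j : Fin 2) :
    IntegrableOn (fun x : Fin 2 → ℝ => x j) blowupP2Polytope := by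
  fin_cases j
  · exact integrableOn_blowupP2Polytope_comp continuous_snd
  · simpa using integrableOn_blowupP2Polytope_comp (continuous_fst.sub continuous_snd)

theorem setIntegral_blowupP2Polytope_comp (f : ℝ × ℝ → ℝ) :
    ∫ x in blowupP2Polytope, f (blowupP2Coords x) = ∫ p in blowupP2Trapezoid, f p := by
  rw [blowupP2Polytope_eq_preimage]
  exact measurePreserving_blowupP2Coords.setIntegral_preimage_emb
    blowupP2Coords.measurableEmbedding f _

theorem setIntegral_blowupP2Polytope_apply_zero : ∫ x in blowupP2Polytope, x 0 = 1 / 3 :=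
  (setIntegral_blowupP2Polytope_comp Prod.snd).trans setIntegral_blowupP2Trapezoid_snd

theorem setIntegral_blowupP2Polytope_apply_one : ∫ x in blowupP2Polytope, x 1 = 1 / 3 := by
  have h := setIntegral_blowupP2Polytope_comp (fun p => p.1 - p.2)
  simp only [blowupP2Coords_apply, add_sub_cancel_left] at h
  rw [h, integral_sub (integrableOn_blowupP2Trapezoid continuous_fst)
    (integrableOn_blowupP2Trapezoid continuous_snd), setIntegral_blowupP2Trapezoid_fst,
    setIntegral_blowupP2Trapezoid_snd]
  norm_num

theorem barycenter_blowupP2Polytope :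
    (volume blowupP2Polytope).toReal⁻¹ • ∫ x in blowupP2Polytope, x = ![1 / 12, 1 / 12] := by
  ext j
  rw [Pi.smul_apply, eval_integral integrableOn_blowupP2Polytope_apply, ← measureReal_def,
    volume_real_blowupP2Polytope]
  fin_cases j
  · norm_num [setIntegral_blowupP2Polytope_apply_zero]
  · norm_num [setIntegral_blowupP2Polytope_apply_one]

theorem iInf_one_div_pairing_blowupP2Normals_add_one :
    ⨅ i : Fin 4, 1 / ((∑ j, ![1 / 12, 1 / 12] j * blowupP2Normals i j) + 1) = (6 / 7 : ℝ) := by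
  refine IsGLB.ciInf_eq (IsLeast.isGLB ⟨⟨1, ?_⟩, ?_⟩)
  · norm_num [blowupP2Normals]
  · rintro _ ⟨i, rfl⟩
    fin_cases i <;> norm_num [blowupP2Normals]

/-- Blum–Jonsson formula computation for `X = P(O_{P²} ⊕ O_{P²}(-1))`: with `b` the barycenter
of `Δ = {x : ⟨x, vᵢ⟩ ≥ -1, i = 1,…,4}`, one has `δ(X) = min_i 1/(⟨b, vᵢ⟩ + 1) = 6/7`. -/
theorem delta_invariant_blowup_P2
    (Δ : Set (Fin 2 → ℝ))
    (hΔ : Δ = {x : Fin 2 → ℝ | ∀ i : Fin 4, -1 ≤ ∑ j, x j * blowupP2Normals i j})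
    (b : Fin 2 → ℝ) (hb : b = (volume Δ).toReal⁻¹ • ∫ x in Δ, x) :
    (⨅ i : Fin 4, 1 / ((∑ j, b j * blowupP2Normals i j) + 1)) = 6 / 7 := by
  rw [hb, hΔ, ← blowupP2Polytope, barycenter_blowupP2Polytope]
  exact iInf_one_div_pairing_blowupP2Normals_add_one
end
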